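/- arXiv:1612.00512 — 7 statements merged into one kernel-verified Lean document; each statement's English description precedes it below -/
import Mathlib

section
/- Suppose f : (0,∞) → (0,∞) is continuously differentiable with f'(x) > 0 for x > x₁, f'(x) → 0 as x → ∞, f(x) → ∞ as x → ∞, and f' is decreasing on [x₂,∞). Then for every ε > 0 there exists x₀(ε) > 0 such that for all x > y ≥ x₀(ε), f(x)/x < (1+ε)·f(y)/y. -/
open Filter Real Set

theorem f_div_x_almost_decreasing
    (f : ℝ → ℝ)
    (hC1 : ∀ x > (0:ℝ), ContinuousAt (deriv f) x ∧ DifferentiableAt ℝ f x)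
    (hpos : ∀ x > (0:ℝ), 0 < f x)
    (x₁ x₂ : ℝ) (hx₁ : 0 < x₁) (hx₂ : 0 < x₂)
    (hderivpos : ∀ x > x₁, 0 < deriv f x)
    (hderivdec : AntitoneOn (deriv f) (Set.Ici x₂))
    (hderiv0 : Filter.Tendsto (deriv f) Filter.atTop (nhds 0))
    (hfinfty : Filter.Tendsto f Filter.atTop Filter.atTop) :
    ∀ ε > (0:ℝ), ∃ x₀ > (0:ℝ), ∀ x y : ℝ, x₀ ≤ y → y < x →
      f x / x < (1 + ε) * (f y / y) := by
  intro ε hε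
  -- mean value theorem helper
  have mvt : ∀ a b : ℝ, 0 < a → a < b →
      ∃ c ∈ Set.Ioo a b, deriv f c = (f b - f a) / (b - a) := by
    intro a b ha hab
    have hcont : ContinuousOn f (Set.Icc a b) := fun z hz =>
      ((hC1 z (lt_of_lt_of_le ha hz.1)).2.continuousAt).continuousWithinAt
    have hdiff : ∀ z ∈ Set.Ioo a b, HasDerivAt f (deriv f z) z := fun z hz =>
      ((hC1 z (ha.trans hz.1)).2).hasDerivAt
    exact exists_hasDerivAt_eq_slope f (deriv f) hab hcont hdiff
  -- eventual bounds
  have h1 : ∀ᶠ y in atTop, deriv f y < ε := hderiv0.eventually (gt_mem_nhds hε)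
  have h2 : ∀ᶠ y in atTop, x₂ ≤ f y := hfinfty.eventually_ge_atTop x₂
  obtain ⟨M, hM⟩ := eventually_atTop.1 (h1.and h2)
  set A := max (max x₁ x₂) (max M 1) with hA
  have hAx₁ : x₁ ≤ A := le_trans (le_max_left _ _) (le_max_left _ _)
  have hAx₂ : x₂ ≤ A := le_trans (le_max_right _ _) (le_max_left _ _)
  have hAM : M ≤ A := le_trans (le_max_left _ _) (le_max_right _ _)
  have hA1 : (1:ℝ) ≤ A := le_trans (le_max_right _ _) (le_max_right _ _)
  refine ⟨A + 1, by linarith, ?_⟩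
  intro x y hy hxy
  have hyx₁ : x₁ < y := by linarith
  have hyx₂ : x₂ < y := by linarith
  have hyM : M ≤ y := by linarith
  have hy0 : (0:ℝ) < y := lt_trans hx₁ hyx₁
  have hx0 : (0:ℝ) < x := lt_trans hy0 hxy
  have hfy : 0 < f y := hpos y hy0
  have hdy : 0 < deriv f y := hderivpos y hyx₁
  obtain ⟨hd1, hd2⟩ := hM y hyM
  -- Key 1 : y * deriv f y < (1+ε) * f y
  have key1 : y * deriv f y < (1 + ε) * f y := by
    obtain ⟨c, hc, hceq⟩ := mvt x₂ y hx₂ hyx₂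
    have hmono : deriv f y ≤ deriv f c :=
      hderivdec (le_of_lt hc.1) (le_of_lt hyx₂) hc.2.le
    rw [hceq] at hmono
    have h3 : deriv f y * (y - x₂) ≤ f y - f x₂ :=
      (le_div_iff₀ (by linarith)).1 hmono
    have hfx₂ : 0 < f x₂ := hpos x₂ hx₂
    nlinarith [mul_le_mul_of_nonneg_left hd1.le hx₂.le]
  -- Key 2 : f x ≤ f y + deriv f y * (x - y)
  have key2 : f x - f y ≤ deriv f y * (x - y) := by
    obtain ⟨c, hc, hceq⟩ := mvt y x hy0 hxy
    have hmono : deriv f c ≤ deriv f y :=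
      hderivdec (le_of_lt hyx₂) (le_of_lt (lt_trans hyx₂ hc.1)) hc.1.le
    rw [hceq] at hmono
    exact (div_le_iff₀ (by linarith)).1 hmono
  rw [← mul_div_assoc, div_lt_div_iff₀ hx0 hy0]
  have e1 : y * (f x - f y) ≤ y * (deriv f y * (x - y)) :=
    mul_le_mul_of_nonneg_left key2 hy0.le
  have e2 : y * deriv f y * (x - y) < (1 + ε) * f y * (x - y) :=
    mul_lt_mul_of_pos_right key1 (sub_pos.2 hxy)
  nlinarith [e1, e2, mul_pos (mul_pos hε hy0) hfy]
end

section
/- Let f : (0,∞) → (0,∞) satisfy f(x) = o(x/log x) as x → ∞. Fix μ* > 0 and for ε > 0 set φ(ε) = e^{-ε μ*}. Then for every sufficiently small ε > 0 there exists x₃(ε) > 0 such that for all x ≥ x₃(ε), ∫ₓ^{x/φ(ε)} (1/f(u)) du − (3/4)·μ*·log x ≥ (μ*/4)·log x > 0. -/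
open Filter Real Set

theorem integral_estimate_small_f
    (f : ℝ → ℝ)
    (hc : ContinuousOn f (Set.Ioi 0))
    (hpos : ∀ x > (0:ℝ), 0 < f x)
    (hsmall : Filter.Tendsto (fun x => f x * Real.log x / x) Filter.atTop (nhds 0))
    (μs : ℝ) (hμs : 0 < μs) :
    ∃ ε₀ > (0:ℝ), ∀ ε : ℝ, 0 < ε → ε < ε₀ →
      ∃ x₃ > (0:ℝ), ∀ x ≥ x₃,
        (μs / 4) * Real.log x ≤
          (∫ u in x..(x / Real.exp (-ε * μs)), 1 / f u) - (3/4) * μs * Real.log x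
        ∧ 0 < (μs / 4) * Real.log x := by
  refine ⟨1, one_pos, fun ε hε hε1 => ?_⟩
  have h := Metric.tendsto_nhds.mp hsmall ε hε
  rw [Filter.eventually_atTop] at h
  obtain ⟨X, hX⟩ := h
  refine ⟨max X 2, lt_of_lt_of_le two_pos (le_max_right _ _), fun x hx => ?_⟩
  have hx2 : (2:ℝ) ≤ x := le_trans (le_max_right _ _) hx
  have hxX : X ≤ x := le_trans (le_max_left _ _) hx
  have hx0 : (0:ℝ) < x := by linarith
  have hlogx : 0 < Real.log x := Real.log_pos (by linarith)
  set a := ε * μs with ha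
  have ha0 : 0 < a := mul_pos hε hμs
  have hbdef : x / Real.exp (-ε * μs) = x * Real.exp a := by
    rw [neg_mul, Real.exp_neg, div_eq_mul_inv, inv_inv]
  set b := x * Real.exp a with hb
  have hxb : x ≤ b := by
    have : (1:ℝ) ≤ Real.exp a := Real.one_le_exp ha0.le
    nlinarith
  have hb0 : 0 < b := lt_of_lt_of_le hx0 hxb
  -- pointwise bound on [x, b]
  have hptwise : ∀ u ∈ Set.Icc x b, Real.log u / (ε * u) ≤ 1 / f u := by
    intro u hu
    have hu2 : (2:ℝ) ≤ u := le_trans hx2 hu.1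
    have hu0 : (0:ℝ) < u := by linarith
    have hlogu : 0 < Real.log u := Real.log_pos (by linarith)
    have hfu : 0 < f u := hpos u hu0
    have hsm := hX u (le_trans hxX hu.1)
    rw [Real.dist_eq, sub_zero, abs_of_pos (by positivity)] at hsm
    have hlt : f u * Real.log u < ε * u := by
      have := (div_lt_iff₀ hu0).mp hsm
      linarith
    rw [div_le_div_iff₀ (by positivity) hfu]
    nlinarith
  -- integrability
  have hsub : Set.Icc x b ⊆ Set.Ioi 0 := fun u hu => lt_of_lt_of_le hx0 hu.1
  have hint1 : IntervalIntegrable (fun u => Real.log u / (ε * u)) MeasureTheory.volume x b := by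
    apply ContinuousOn.intervalIntegrable_of_Icc hxb
    apply ContinuousOn.div (Real.continuousOn_log.mono (fun u hu => ne_of_gt (hsub hu)))
      (continuousOn_const.mul continuousOn_id)
    intro u hu
    have hu0 : (0:ℝ) < u := hsub hu
    exact mul_ne_zero hε.ne' hu0.ne'
  have hint2 : IntervalIntegrable (fun u => 1 / f u) MeasureTheory.volume x b := by
    apply ContinuousOn.intervalIntegrable_of_Icc hxb
    exact continuousOn_const.div (hc.mono hsub) (fun u hu => ne_of_gt (hpos u (hsub hu)))
  have hmono := intervalIntegral.integral_mono_on hxb hint1 hint2 hptwise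
  -- compute the lower integral
  have hcomp : ∫ u in x..b, Real.log u / u = Real.log b ^ 2 / 2 - Real.log x ^ 2 / 2 := by
    apply intervalIntegral.integral_eq_sub_of_hasDerivAt (f := fun v => Real.log v ^ 2 / 2)
    · intro u hu
      rw [Set.uIcc_of_le hxb] at hu
      have hu0 : (0:ℝ) < u := hsub hu
      have h2 : HasDerivAt (fun v => Real.log v ^ 2 / 2) ((2:ℕ) * Real.log u ^ (2-1) * u⁻¹ / 2) u :=
        ((Real.hasDerivAt_log hu0.ne').pow 2).div_const 2
      refine h2.congr_deriv ?_
      rw [show (2:ℕ) - 1 = 1 from rfl, pow_one]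
      push_cast
      field_simp
    · apply ContinuousOn.intervalIntegrable_of_Icc hxb
      exact ContinuousOn.div (Real.continuousOn_log.mono (fun u hu => ne_of_gt (hsub hu)))
        continuousOn_id (fun u hu => ne_of_gt (hsub hu))
  have hval : ∫ u in x..b, Real.log u / (ε * u) = μs * Real.log x + ε * μs ^ 2 / 2 := by
    have heq : ∀ u : ℝ, Real.log u / (ε * u) = (1/ε) * (Real.log u / u) := by
      intro u; field_simp
    simp_rw [heq]
    rw [intervalIntegral.integral_const_mul, hcomp]
    have hlogb : Real.log b = Real.log x + a := by
      rw [hb, Real.log_mul hx0.ne' (Real.exp_pos _).ne', Real.log_exp]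
    rw [hlogb, ha]
    field_simp
    ring
  have hkey : μs * Real.log x ≤ ∫ u in x..(x / Real.exp (-ε * μs)), 1 / f u := by
    rw [hbdef]
    have : ε * μs ^ 2 / 2 ≥ 0 := by positivity
    linarith [hmono, hval.ge, hval.le]
  constructor
  · linarith
  · positivity
end

section
/- Let f : (0,∞) → (0,∞) satisfy f(x) ~ λ·x/log x as x → ∞ for some λ ∈ (0,∞), and let K ∈ (0,1) be a constant. Then lim_{x→∞} (1/log x)·∫_x^{x/K} (1/f(u)) du = (1/λ)·log(1/K). -/
open Filter Real Set

lemma int_log_div {a b : ℝ} (ha : 0 < a) (hab : a ≤ b) :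
    ∫ u in a..b, Real.log u / u = ((Real.log b)^2 - (Real.log a)^2)/2 := by
  have h : ∀ u ∈ Set.uIcc a b, HasDerivAt (fun t => (Real.log t)^2/2) (Real.log u / u) u := by
    intro u hu
    rw [Set.uIcc_of_le hab] at hu
    have hu0 : 0 < u := lt_of_lt_of_le ha hu.1
    have := ((Real.hasDerivAt_log hu0.ne').fun_pow 2).div_const 2
    refine this.congr_deriv ?_
    field_simp
    ring
  have hint : IntervalIntegrable (fun u => Real.log u / u) MeasureTheory.volume a b := by
    apply ContinuousOn.intervalIntegrable
    apply ContinuousOn.div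
    · apply Real.continuousOn_log.mono
      intro u hu
      rw [Set.uIcc_of_le hab] at hu
      exact Set.mem_compl_singleton_iff.mpr (ne_of_gt (lt_of_lt_of_le ha hu.1))
    · exact continuousOn_id
    · intro u hu
      rw [Set.uIcc_of_le hab] at hu
      exact (lt_of_lt_of_le ha hu.1).ne'
  rw [intervalIntegral.integral_eq_sub_of_hasDerivAt h hint]
  ring

set_option maxHeartbeats 800000 in
theorem integral_limit_lambda_finite
    (f : ℝ → ℝ)
    (hc : ContinuousOn f (Set.Ioi 0))
    (hpos : ∀ x > (0:ℝ), 0 < f x)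
    (lam : ℝ) (hlam : 0 < lam)
    (hasym : Filter.Tendsto (fun x => f x / (x / Real.log x)) Filter.atTop (nhds lam))
    (K : ℝ) (hK0 : 0 < K) (hK1 : K < 1) :
    Filter.Tendsto (fun x => (1 / Real.log x) * ∫ u in x..(x / K), 1 / f u)
      Filter.atTop (nhds ((1 / lam) * Real.log (1 / K))) := by
  set c : ℝ := Real.log (1 / K) with hc_def
  have hc0 : 0 < c := Real.log_pos (one_lt_one_div hK0 hK1)
  rw [Metric.tendsto_nhds]
  intro ε hε
  rw [eventually_atTop]
  set δ : ℝ := min (lam / 2) (ε * lam ^ 2 / (4 * (c + 1))) with hδ_def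
  have hδ0 : 0 < δ := by
    apply lt_min (by linarith)
    positivity
  have hδ1 : δ ≤ lam / 2 := min_le_left _ _
  have hδ2 : δ ≤ ε * lam ^ 2 / (4 * (c + 1)) := min_le_right _ _
  have hδc : δ * (4 * (c + 1)) ≤ ε * lam ^ 2 :=
    (le_div_iff₀ (by positivity)).mp hδ2
  have hld : 0 < lam - δ := by linarith
  have hld' : 0 < lam + δ := by linarith
  obtain ⟨X, hX⟩ := eventually_atTop.mp (Metric.tendsto_nhds.mp hasym δ hδ0)
  refine ⟨max (max X 2) (Real.exp (2 * c ^ 2 / (lam * ε) + 1)), fun x hx => ?_⟩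
  have hx2 : (2:ℝ) ≤ x := le_trans (le_trans (le_max_right X 2) (le_max_left _ _)) hx
  have hxX : X ≤ x := le_trans (le_trans (le_max_left X 2) (le_max_left _ _)) hx
  have hx0 : 0 < x := by linarith
  have hlx : 0 < Real.log x := Real.log_pos (by linarith)
  have hlxbig : 2 * c ^ 2 / (lam * ε) + 1 ≤ Real.log x := by
    have := Real.log_le_log (Real.exp_pos _) (le_trans (le_max_right _ _) hx)
    rwa [Real.log_exp] at this
  set y : ℝ := x / K with hy_def
  have hxy : x ≤ y := by
    rw [hy_def, le_div_iff₀ hK0]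
    nlinarith
  set lx : ℝ := Real.log x with hlx_def
  have hεlxlam : 2 * c ^ 2 + lam * ε ≤ ε * lam * lx := by
    have h1 : (2 * c ^ 2 / (lam * ε) + 1) * (lam * ε) ≤ lx * (lam * ε) :=
      mul_le_mul_of_nonneg_right hlxbig (by positivity)
    have e : (2 * c ^ 2 / (lam * ε) + 1) * (lam * ε) = 2 * c ^ 2 + lam * ε := by
      field_simp
    rw [e] at h1
    nlinarith [h1]
  have hly : Real.log y = lx + c := by
    rw [hy_def, Real.log_div hx0.ne' hK0.ne', hc_def, Real.log_div one_ne_zero hK0.ne',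
      Real.log_one]
    ring
  -- pointwise bounds on [x,y]
  have hbounds : ∀ u ∈ Set.Icc x y,
      (1 / (lam + δ)) * (Real.log u / u) ≤ 1 / f u ∧
      1 / f u ≤ (1 / (lam - δ)) * (Real.log u / u) := by
    intro u hu
    have hu2 : (2:ℝ) ≤ u := le_trans hx2 hu.1
    have hu0 : 0 < u := by linarith
    have hlu : 0 < Real.log u := Real.log_pos (by linarith)
    have hq : 0 < u / Real.log u := div_pos hu0 hlu
    have hfu : 0 < f u := hpos u hu0
    have hd := hX u (le_trans hxX hu.1)
    rw [Real.dist_eq, abs_lt] at hd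
    have h1 : f u < (lam + δ) * (u / Real.log u) := by
      have h : f u / (u / Real.log u) < lam + δ := by linarith [hd.2]
      rwa [div_lt_iff₀ hq] at h
    have h2 : (lam - δ) * (u / Real.log u) < f u := by
      have h : lam - δ < f u / (u / Real.log u) := by linarith [hd.1]
      rwa [lt_div_iff₀ hq] at h
    constructor
    · have e1 : (1:ℝ) / ((lam + δ) * (u / Real.log u)) = (1 / (lam + δ)) * (Real.log u / u) := by
        field_simp
      rw [← e1]
      exact one_div_le_one_div_of_le hfu h1.le
    · have e2 : (1:ℝ) / ((lam - δ) * (u / Real.log u)) = (1 / (lam - δ)) * (Real.log u / u) := by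
        field_simp
      rw [← e2]
      exact one_div_le_one_div_of_le (mul_pos hld hq) h2.le
  -- integrability
  have hIcc_sub : Set.Icc x y ⊆ Set.Ioi 0 := fun u hu => lt_of_lt_of_le hx0 hu.1
  have huIcc : Set.uIcc x y = Set.Icc x y := Set.uIcc_of_le hxy
  have hint_f : IntervalIntegrable (fun u => 1 / f u) MeasureTheory.volume x y := by
    apply ContinuousOn.intervalIntegrable
    rw [huIcc]
    exact ContinuousOn.div continuousOn_const (hc.mono hIcc_sub)
      (fun u hu => (hpos u (hIcc_sub hu)).ne')
  have hint_g : IntervalIntegrable (fun u => Real.log u / u) MeasureTheory.volume x y := by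
    apply ContinuousOn.intervalIntegrable
    rw [huIcc]
    apply ContinuousOn.div
    · exact Real.continuousOn_log.mono
        (fun u hu => Set.mem_compl_singleton_iff.mpr (hIcc_sub hu).ne')
    · exact continuousOn_id
    · exact fun u hu => (hIcc_sub hu).ne'
  have hA : (∫ u in x..y, Real.log u / u) = c * lx + c ^ 2 / 2 := by
    rw [int_log_div hx0 hxy, hly]
    ring
  set I : ℝ := ∫ u in x..y, 1 / f u with hI_def
  have hIub : I ≤ (1 / (lam - δ)) * (c * lx + c ^ 2 / 2) := by
    have h := intervalIntegral.integral_mono_on hxy hint_f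
      (hint_g.const_mul (1 / (lam - δ))) (fun u hu => (hbounds u hu).2)
    rwa [intervalIntegral.integral_const_mul, hA] at h
  have hIlb : (1 / (lam + δ)) * (c * lx + c ^ 2 / 2) ≤ I := by
    have h := intervalIntegral.integral_mono_on hxy
      (hint_g.const_mul (1 / (lam + δ))) hint_f (fun u hu => (hbounds u hu).1)
    rwa [intervalIntegral.integral_const_mul, hA] at h
  -- division-free forms
  have hIub' : I * (lam - δ) ≤ c * lx + c ^ 2 / 2 := by
    have h := mul_le_mul_of_nonneg_right hIub hld.le
    have e : 1 / (lam - δ) * (c * lx + c ^ 2 / 2) * (lam - δ) = c * lx + c ^ 2 / 2 := by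
      field_simp <;> ring
    linarith [h, e.le, e.ge]
  have hIlb' : c * lx + c ^ 2 / 2 ≤ I * (lam + δ) := by
    have h := mul_le_mul_of_nonneg_right hIlb hld'.le
    have e : 1 / (lam + δ) * (c * lx + c ^ 2 / 2) * (lam + δ) = c * lx + c ^ 2 / 2 := by
      field_simp <;> ring
    linarith [h, e.le, e.ge]
  rw [Real.dist_eq, abs_sub_lt_iff]
  have ha := mul_le_mul_of_nonneg_right hδc hlx.le
  have hb := mul_le_mul_of_nonneg_right hδ1
    (mul_nonneg (mul_nonneg hε.le hlam.le) hlx.le)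
  have hc2 := mul_le_mul_of_nonneg_right hεlxlam hlam.le
  have hδlx : 0 < δ * lx := mul_pos hδ0 hlx
  constructor
  · -- upper bound
    have hpoly1 : (c * lx + c ^ 2 / 2) * lam < ((c + ε * lam) * lx) * (lam - δ) := by
      nlinarith [ha, hb, hc2, hδlx, hc0, hlx, hε, hlam, hδ0]
    have h3 : I * lam * (lam - δ) ≤ (c * lx + c ^ 2 / 2) * lam := by
      nlinarith [mul_le_mul_of_nonneg_right hIub' hlam.le]
    have h4 : I * lam < (c + ε * lam) * lx :=
      lt_of_mul_lt_mul_right (lt_of_le_of_lt h3 hpoly1) hld.le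
    have e1 : (1 / lx) * I = I / lx := by ring
    have e2 : 1 / lam * c + ε = (c + ε * lam) / lam := by field_simp <;> ring
    have : (1 / lx) * I < 1 / lam * c + ε := by
      rw [e1, e2, div_lt_div_iff₀ hlx hlam]
      linarith [h4]
    linarith
  · -- lower bound
    have hpoly2 : ((c - ε * lam) * lx) * (lam + δ) < (c * lx + c ^ 2 / 2) * lam := by
      nlinarith [ha, hδlx, hc0, hlx, hε, hlam, hδ0,
        mul_nonneg (mul_nonneg (mul_nonneg hε.le hδ0.le) hlam.le) hlx.le,
        mul_nonneg (mul_nonneg hlam.le hc0.le) hc0.le]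
    have h3 : (c * lx + c ^ 2 / 2) * lam ≤ I * lam * (lam + δ) := by
      nlinarith [mul_le_mul_of_nonneg_right hIlb' hlam.le]
    have h4 : (c - ε * lam) * lx < I * lam :=
      lt_of_mul_lt_mul_right (lt_of_lt_of_le hpoly2 h3) hld'.le
    have e1 : (1 / lx) * I = I / lx := by ring
    have e2 : 1 / lam * c - ε = (c - ε * lam) / lam := by field_simp <;> ring
    have : 1 / lam * c - ε < (1 / lx) * I := by
      rw [e1, e2, div_lt_div_iff₀ hlam hlx]
      linarith [h4]
    linarith
end

section
/- Let M > 0, and let f : (0,∞) → (0,∞) with f'(x) > 0 for x > x₁ and f'(x) → 0 as x → ∞; set F(x) = ∫₁ˣ 1/f(u) du. Let a be a measurable function with a(t) > 0 for all t ≥ T* satisfying lim_{x→∞} (f(x)/x)·a(F(x)/M) = 0. Then lim_{t→∞} F⁻¹(Mt − a(t)) / F⁻¹(Mt) = 1. -/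
open Filter Real Set MeasureTheory

theorem Finv_ratio_tendsto_one_of_a_small
    (f : ℝ → ℝ)
    (hdiff : ∀ x > (0:ℝ), DifferentiableAt ℝ f x)
    (hpos : ∀ x > (0:ℝ), 0 < f x)
    (x₁ : ℝ) (hx₁ : 0 < x₁)
    (hderivpos : ∀ x > x₁, 0 < deriv f x)
    (hderiv0 : Filter.Tendsto (deriv f) Filter.atTop (nhds 0))
    (F Finv : ℝ → ℝ)
    (hF : ∀ x > (0:ℝ), F x = ∫ u in (1:ℝ)..x, 1 / f u)
    (hFinfty : Filter.Tendsto F Filter.atTop Filter.atTop)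
    (hFleft : ∀ x > (0:ℝ), Finv (F x) = x)
    (hFright : ∀ᶠ y in Filter.atTop, 0 < Finv y ∧ F (Finv y) = y)
    (M : ℝ) (hM : 0 < M)
    (a : ℝ → ℝ) (ha_meas : Measurable a)
    (Tstar : ℝ) (ha_pos : ∀ t ≥ Tstar, 0 < a t)
    (ha_small : Filter.Tendsto (fun x => (f x / x) * a (F x / M)) Filter.atTop (nhds 0)) :
    Filter.Tendsto (fun t => Finv (M * t - a t) / Finv (M * t)) Filter.atTop (nhds 1) := by
  have hfc : ∀ x : ℝ, 0 < x → ContinuousAt f x := fun x hx => (hdiff x hx).continuousAt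
  -- interval integrability of 1/f on positive intervals
  have hint : ∀ p q : ℝ, 0 < p → 0 < q →
      IntervalIntegrable (fun u => 1 / f u) MeasureTheory.volume p q := by
    intro p q hp hq
    apply ContinuousOn.intervalIntegrable
    intro u hu
    have hu0 : 0 < u := lt_of_lt_of_le (lt_min hp hq) hu.1
    exact (continuousAt_const.div (hfc u hu0) (hpos u hu0).ne').continuousWithinAt
  have hFsub : ∀ p q : ℝ, 0 < p → 0 < q → F q - F p = ∫ u in p..q, 1 / f u := by
    intro p q hp hq
    rw [hF p hp, hF q hq]
    exact intervalIntegral.integral_interval_sub_left (hint 1 q one_pos hq)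
      (hint 1 p one_pos hp)
  have hFmono : ∀ p q : ℝ, 0 < p → 0 < q → p < q → F p < F q := by
    intro p q hp hq hpq
    have h1 : 0 < ∫ u in p..q, 1 / f u := by
      apply intervalIntegral.intervalIntegral_pos_of_pos_on (hint p q hp hq)
      · intro u hu
        exact div_pos one_pos (hpos u (hp.trans hu.1))
      · exact hpq
    have h2 := hFsub p q hp hq
    linarith
  have hFmono' : ∀ p q : ℝ, 0 < p → 0 < q → F p ≤ F q → p ≤ q := by
    intro p q hp hq h
    by_contra hc
    exact absurd h (not_le.2 (hFmono q p hq hp (not_le.1 hc)))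
  -- f monotone on [x₁, ∞)
  have hfmono : ∀ p q : ℝ, x₁ ≤ p → p ≤ q → f p ≤ f q := by
    have hsm : StrictMonoOn f (Set.Ici x₁) := by
      apply strictMonoOn_of_deriv_pos (convex_Ici x₁)
      · intro u hu
        exact (hdiff u (hx₁.trans_le hu)).continuousAt.continuousWithinAt
      · intro u hu
        rw [interior_Ici] at hu
        exact hderivpos u hu
    intro p q hp hpq
    exact hsm.monotoneOn hp (hp.trans hpq) hpq
  set B : ℝ := max x₁ 1 + 1 with hBdef
  have hBx₁ : x₁ < B := lt_of_le_of_lt (le_max_left _ _) (lt_add_one _)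
  have hB1 : (1:ℝ) < B := lt_of_le_of_lt (le_max_right _ _) (lt_add_one _)
  set x : ℝ → ℝ := fun t => Finv (M * t) with hxdef
  have hMt : Tendsto (fun t : ℝ => M * t) atTop atTop :=
    Tendsto.const_mul_atTop hM tendsto_id
  have hxF : ∀ᶠ t in atTop, 0 < x t ∧ F (x t) = M * t := hMt.eventually hFright
  have hx_top : Tendsto x atTop atTop := by
    rw [tendsto_atTop]
    intro z
    have h1 : ∀ᶠ t in atTop, F (max z 1) ≤ M * t := hMt.eventually (eventually_ge_atTop _)
    filter_upwards [hxF, h1] with t ht h1t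
    have hz0 : (0:ℝ) < max z 1 := lt_of_lt_of_le one_pos (le_max_right _ _)
    have h2 : max z 1 ≤ x t := hFmono' _ _ hz0 ht.1 (by rw [ht.2]; exact h1t)
    exact le_trans (le_max_left _ _) h2
  have hteq : ∀ᶠ t in atTop, F (x t) / M = t := by
    filter_upwards [hxF] with t ht
    rw [ht.2]
    field_simp
  have hlim : Tendsto (fun t => f (x t) / x t * a t) atTop (nhds 0) := by
    apply (ha_small.comp hx_top).congr'
    filter_upwards [hteq] with t ht
    simp only [Function.comp_apply, ht]
  have hsmall : ∀ᶠ t in atTop, f (x t) / x t * a t ≤ 1/2 :=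
    hlim.eventually (eventually_le_nhds (by norm_num))
  have hxB : ∀ᶠ t in atTop, 2 * B ≤ x t := hx_top.eventually (eventually_ge_atTop _)
  have htT : ∀ᶠ t in atTop, Tstar ≤ t := eventually_ge_atTop _
  -- the key eventual lower bound for M*t - a t
  have hkey : ∀ᶠ t in atTop, F (x t / 2) ≤ M * t - a t := by
    filter_upwards [hxF, hsmall, hxB, htT] with t hx ht2 htB htT'
    set X := x t with hXd
    have hX0 : 0 < X := hx.1
    have hx₁X2 : x₁ < X / 2 := by
      have h1 : x₁ ≤ max x₁ 1 := le_max_left _ _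
      simp only [hBdef] at htB
      linarith
    have hX20 : 0 < X / 2 := lt_trans hx₁ hx₁X2
    have hfX : 0 < f X := hpos X hX0
    have hat : 0 < a t := ha_pos t htT'
    have h2 : f X * a t ≤ 1/2 * X := by
      rw [div_mul_eq_mul_div, div_le_iff₀ hX0] at ht2
      linarith
    have hFX2 : F X - F (X/2) = ∫ u in (X/2)..X, 1 / f u := hFsub _ _ hX20 hX0
    have hlb : (X - X/2) * (1 / f X) ≤ ∫ u in (X/2)..X, 1 / f u := by
      have h := intervalIntegral.integral_mono_on (by linarith : X/2 ≤ X)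
        intervalIntegrable_const (hint (X/2) X hX20 hX0)
        (fun u hu => one_div_le_one_div_of_le (hpos u (lt_of_lt_of_le hX20 hu.1))
          (hfmono u X (le_trans hx₁X2.le hu.1) hu.2))
      simpa [smul_eq_mul, mul_comm] using h
    have hat' : a t ≤ X / 2 * (1 / f X) := by
      rw [mul_one_div, le_div_iff₀ hfX]
      linarith
    have := hx.2
    linarith
  have hMa_top : Tendsto (fun t => M * t - a t) atTop atTop := by
    apply tendsto_atTop_mono' atTop hkey
    exact hFinfty.comp (hx_top.atTop_div_const two_pos)
  have hyF : ∀ᶠ t in atTop, 0 < Finv (M * t - a t) ∧ F (Finv (M * t - a t)) = M * t - a t :=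
    hMa_top.eventually hFright
  have hup : ∀ᶠ t in atTop, Finv (M * t - a t) / Finv (M * t) ≤ 1 := by
    filter_upwards [hxF, hyF, htT] with t hx hy htT'
    have hat : 0 < a t := ha_pos t htT'
    have h1 : Finv (M * t - a t) ≤ x t :=
      hFmono' _ _ hy.1 hx.1 (by rw [hy.2, hx.2]; linarith)
    exact div_le_one_of_le₀ h1 hx.1.le
  have hlow : ∀ᶠ t in atTop,
      1 - f (x t) / x t * a t ≤ Finv (M * t - a t) / Finv (M * t) := by
    filter_upwards [hxF, hyF, htT, hxB, hkey] with t hx hy htT' htB hkey'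
    set X := x t with hXd
    set Y := Finv (M * t - a t) with hYd
    have hX0 : 0 < X := hx.1
    have hY0 : 0 < Y := hy.1
    have hfX : 0 < f X := hpos X hX0
    have hat : 0 < a t := ha_pos t htT'
    have hx₁X2 : x₁ < X / 2 := by
      have h1 : x₁ ≤ max x₁ 1 := le_max_left _ _
      simp only [hBdef] at htB
      linarith
    have hYX2 : X / 2 ≤ Y :=
      hFmono' _ _ (by linarith) hY0 (by rw [hy.2]; exact hkey')
    have hYX : Y ≤ X :=
      hFmono' _ _ hY0 hX0 (by rw [hy.2, hx.2]; linarith)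
    have hdiffint : F X - F Y = ∫ u in Y..X, 1 / f u := hFsub _ _ hY0 hX0
    have hlb : (X - Y) * (1 / f X) ≤ ∫ u in Y..X, 1 / f u := by
      have h := intervalIntegral.integral_mono_on hYX intervalIntegrable_const
        (hint Y X hY0 hX0)
        (fun u hu => one_div_le_one_div_of_le
          (hpos u (lt_of_lt_of_le hY0 hu.1))
          (hfmono u X (le_trans (le_trans hx₁X2.le hYX2) hu.1) hu.2))
      simpa [smul_eq_mul, mul_comm] using h
    have h3 : (X - Y) * (1 / f X) ≤ a t := by
      have hFXY : F X - F Y = a t := by rw [hx.2, hy.2]; ring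
      calc (X - Y) * (1 / f X) ≤ ∫ u in Y..X, 1 / f u := hlb
        _ = F X - F Y := hdiffint.symm
        _ = a t := hFXY
    have h4 : X - Y ≤ a t * f X := by
      rw [mul_one_div, div_le_iff₀ hfX] at h3
      linarith
    rw [le_div_iff₀ hX0]
    have expand : (1 - f X / X * a t) * X = X - f X * a t := by
      field_simp
    rw [expand]
    nlinarith [h4]
  have h1 : Tendsto (fun t => 1 - f (x t) / x t * a t) atTop (nhds 1) := by
    have h := (tendsto_const_nhds : Tendsto (fun _ : ℝ => (1:ℝ)) atTop (nhds 1)).sub hlim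
    simpa using h
  exact tendsto_of_tendsto_of_tendsto_of_le_of_le' h1 tendsto_const_nhds hlow hup
end

section
/- Let M > 0 and f : (0,∞) → (0,∞) with f'(x) > 0 for x > x₁ and f'(x) → 0 as x → ∞; set F(x) = ∫₁ˣ 1/f(u) du. Let ε : ℝ⁺ → (0,∞) be measurable, nonincreasing with ε(t) → 0 as t → ∞. If lim_{x→∞} (f(x)/x)·∫₀^{F(x)/M} ε(s) ds = +∞, then lim_{t→∞} F⁻¹(Mt − ∫₀^t ε(s) ds) / F⁻¹(Mt) = 0. -/
open Filter Real Set MeasureTheory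

theorem Finv_ratio_tendsto_zero_of_eps_big
    (f : ℝ → ℝ)
    (hdiff : ∀ x > (0:ℝ), DifferentiableAt ℝ f x)
    (hpos : ∀ x > (0:ℝ), 0 < f x)
    (x₁ : ℝ) (hx₁ : 0 < x₁)
    (hderivpos : ∀ x > x₁, 0 < deriv f x)
    (hderiv0 : Filter.Tendsto (deriv f) Filter.atTop (nhds 0))
    (F Finv : ℝ → ℝ)
    (hF : ∀ x > (0:ℝ), F x = ∫ u in (1:ℝ)..x, 1 / f u)
    (hFinfty : Filter.Tendsto F Filter.atTop Filter.atTop)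
    (hFleft : ∀ x > (0:ℝ), Finv (F x) = x)
    (hFright : ∀ᶠ y in Filter.atTop, 0 < Finv y ∧ F (Finv y) = y)
    (M : ℝ) (hM : 0 < M)
    (eps : ℝ → ℝ) (heps_meas : Measurable eps)
    (heps_pos : ∀ t ≥ (0:ℝ), 0 < eps t)
    (heps_anti : AntitoneOn eps (Set.Ici 0))
    (heps0 : Filter.Tendsto eps Filter.atTop (nhds 0))
    (hbig : Filter.Tendsto (fun x => (f x / x) * ∫ s in (0:ℝ)..(F x / M), eps s)
      Filter.atTop Filter.atTop) :
    Filter.Tendsto (fun t => Finv (M * t - ∫ s in (0:ℝ)..t, eps s) / Finv (M * t))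
      Filter.atTop (nhds 0) := by
  set E : ℝ → ℝ := fun t => ∫ s in (0:ℝ)..t, eps s with hEdef
  -- basic integrability of eps on nonnegative intervals
  have hepsInt : ∀ a b : ℝ, 0 ≤ a → 0 ≤ b → IntervalIntegrable eps volume a b := by
    intro a b ha hb
    exact (heps_anti.mono (fun u hu => le_trans (le_min ha hb) hu.1)).intervalIntegrable
  have hEsub : ∀ a b : ℝ, 0 ≤ a → 0 ≤ b → E b - E a = ∫ s in a..b, eps s := by
    intro a b ha hb
    exact intervalIntegral.integral_interval_sub_left (hepsInt 0 b le_rfl hb)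
      (hepsInt 0 a le_rfl ha)
  have hEmono : ∀ a b : ℝ, 0 ≤ a → a ≤ b → E a ≤ E b := by
    intro a b ha hab
    have h0 : (0:ℝ) ≤ ∫ s in a..b, eps s :=
      intervalIntegral.integral_nonneg hab (fun u hu => (heps_pos u (ha.trans hu.1)).le)
    have := hEsub a b ha (ha.trans hab)
    linarith
  have hEpos : ∀ t : ℝ, 0 < t → 0 < E t := by
    intro t ht
    exact intervalIntegral.intervalIntegral_pos_of_pos_on (hepsInt 0 t le_rfl ht.le)
      (fun s hs => heps_pos s hs.1.le) ht
  -- continuity and integrability of 1 / f on positive intervals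
  have hinvc : ∀ a b : ℝ, 0 < a → 0 < b → ContinuousOn (fun u => 1 / f u) (Set.uIcc a b) := by
    intro a b ha hb u hu
    have hu0 : 0 < u := lt_of_lt_of_le (lt_min ha hb) hu.1
    exact (continuousAt_const.div (hdiff u hu0).continuousAt (ne_of_gt (hpos u hu0))).continuousWithinAt
  have hinvInt : ∀ a b : ℝ, 0 < a → 0 < b → IntervalIntegrable (fun u => 1 / f u) volume a b :=
    fun a b ha hb => (hinvc a b ha hb).intervalIntegrable
  have hFsub : ∀ a b : ℝ, 0 < a → 0 < b → F b - F a = ∫ u in a..b, 1 / f u := by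
    intro a b ha hb
    rw [hF b hb, hF a ha]
    exact intervalIntegral.integral_interval_sub_left (hinvInt 1 b one_pos hb)
      (hinvInt 1 a one_pos ha)
  have hFle : ∀ a b : ℝ, 0 < a → a ≤ b → F a ≤ F b := by
    intro a b ha hab
    have h0 : (0:ℝ) ≤ ∫ u in a..b, 1 / f u :=
      intervalIntegral.integral_nonneg hab
        (fun u hu => le_of_lt (one_div_pos.2 (hpos u (lt_of_lt_of_le ha hu.1))))
    have := hFsub a b ha (ha.trans_le hab)
    linarith
  have hFlt : ∀ a b : ℝ, 0 < a → a < b → F a < F b := by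
    intro a b ha hab
    have h0 : (0:ℝ) < ∫ u in a..b, 1 / f u :=
      intervalIntegral.intervalIntegral_pos_of_pos_on (hinvInt a b ha (ha.trans hab))
        (fun u hu => one_div_pos.2 (hpos u (ha.trans hu.1))) hab
    have := hFsub a b ha (ha.trans hab)
    linarith
  have hF1 : F 1 = 0 := by rw [hF 1 one_pos, intervalIntegral.integral_same]
  have hFnonneg : ∀ u : ℝ, 1 ≤ u → 0 ≤ F u := by
    intro u hu
    have := hFle 1 u one_pos hu
    linarith [hF1 ▸ this]
  -- composition with Finv tends to atTop
  have hcomp : ∀ u : ℝ → ℝ, Tendsto u atTop atTop →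
      Tendsto (fun t => Finv (u t)) atTop atTop := by
    intro u hu
    rw [tendsto_atTop]
    intro B
    have hB1 : ∀ᶠ t in atTop, 0 < Finv (u t) ∧ F (Finv (u t)) = u t := hu.eventually hFright
    have hB2 : ∀ᶠ t in atTop, F (max B 1) ≤ u t := hu.eventually (eventually_ge_atTop _)
    filter_upwards [hB1, hB2] with t ht1 ht2
    by_contra hc
    push_neg at hc
    have hc' : Finv (u t) < max B 1 := lt_of_lt_of_le hc (le_max_left _ _)
    have := hFlt _ _ ht1.1 hc'
    rw [ht1.2] at this
    exact absurd ht2 (not_le.2 this)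
  have htM : Tendsto (fun t => M * t) atTop atTop := Tendsto.const_mul_atTop hM tendsto_id
  -- M * t - E t → ∞
  have htME : Tendsto (fun t => M * t - E t) atTop atTop := by
    obtain ⟨t₀, ht₀⟩ := (heps0.eventually (eventually_lt_nhds (half_pos hM))).exists_forall_of_atTop
    have ht₀' : ∀ s ≥ max t₀ 0, eps s < M / 2 := fun s hs => ht₀ s ((le_max_left _ _).trans hs)
    set T := max t₀ 0 with hT
    have hT0 : (0:ℝ) ≤ T := le_max_right _ _
    have hbound : ∀ t ≥ T, M / 2 * t - E T ≤ M * t - E t := by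
      intro t ht
      have h1 : E t - E T = ∫ s in T..t, eps s := hEsub T t hT0 (hT0.trans ht)
      have h2 : (∫ s in T..t, eps s) ≤ ∫ s in T..t, (M / 2 : ℝ) := by
        apply intervalIntegral.integral_mono_on ht (hepsInt T t hT0 (hT0.trans ht))
          intervalIntegrable_const
        intro s hs
        exact (ht₀' s hs.1).le
      rw [intervalIntegral.integral_const, smul_eq_mul] at h2
      nlinarith
    apply tendsto_atTop_mono' _ _ ((tendsto_atTop_add_const_right _ (-E T)
      (Tendsto.const_mul_atTop (half_pos hM) tendsto_id)))
    filter_upwards [eventually_ge_atTop T] with t ht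
    simpa [sub_eq_add_neg] using hbound t ht
  have htMEfull : Tendsto (fun t => M * t - E t) atTop atTop := htME
  -- main estimate
  rw [Metric.tendsto_nhds]
  intro ε hε
  set δ : ℝ := min ε (1/2) with hδdef
  have hδ0 : 0 < δ := lt_min hε (by norm_num)
  have hδ1 : δ < 1 := lt_of_le_of_lt (min_le_right _ _) (by norm_num)
  have hδε : δ ≤ ε := min_le_left _ _
  set C : ℝ := 1 - Real.log δ with hCdef
  have hlogδ : Real.log δ < 0 := Real.log_neg hδ0 hδ1
  have hC0 : 0 < C := by simp only [hCdef]; linarith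
  obtain ⟨R, hR⟩ := eventually_atTop.1 (hbig.eventually (eventually_ge_atTop C))
  have h1 : ∀ᶠ t : ℝ in atTop, (1:ℝ) ≤ t := eventually_ge_atTop 1
  have h2 : ∀ᶠ t : ℝ in atTop, 0 < Finv (M * t) ∧ F (Finv (M * t)) = M * t :=
    htM.eventually hFright
  have h3 : ∀ᶠ t : ℝ in atTop,
      0 < Finv (M * t - E t) ∧ F (Finv (M * t - E t)) = M * t - E t :=
    htMEfull.eventually hFright
  have h4 : ∀ᶠ t : ℝ in atTop, (max R 1 + 1) / δ ≤ Finv (M * t) :=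
    (hcomp _ htM).eventually (eventually_ge_atTop _)
  filter_upwards [h1, h2, h3, h4] with t ht1 ht2 ht3 ht4
  obtain ⟨hx0, hxF⟩ := ht2
  obtain ⟨hy0, hyF⟩ := ht3
  set x := Finv (M * t) with hxdef
  set y := Finv (M * t - E t) with hydef
  have ht0 : (0:ℝ) < t := lt_of_lt_of_le one_pos ht1
  have hδx : max R 1 + 1 ≤ δ * x := by
    have := mul_le_mul_of_nonneg_left ht4 hδ0.le
    rwa [mul_div_cancel₀ _ (ne_of_gt hδ0)] at this
  have hδx1 : (1:ℝ) ≤ δ * x := by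
    have : (1:ℝ) ≤ max R 1 + 1 := by
      have := le_max_right R 1; linarith
    linarith
  have hδxR : R ≤ δ * x := by
    have := le_max_left R 1; linarith
  have hδx0 : 0 < δ * x := lt_of_lt_of_le one_pos hδx1
  have hδxx : δ * x < x := by
    have := mul_lt_mul_of_pos_right hδ1 hx0
    simpa using this
  have hEt : 0 < E t := hEpos t ht0
  -- pointwise bound
  have hptwise : ∀ u ∈ Set.Icc (δ * x) x, 1 / f u ≤ E t / C * (1 / u) := by
    intro u hu
    have hu0 : 0 < u := lt_of_lt_of_le hδx0 hu.1
    have hfu : 0 < f u := hpos u hu0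
    have hA : C ≤ (f u / u) * ∫ s in (0:ℝ)..(F u / M), eps s := hR u (hδxR.trans hu.1)
    have hFu0 : 0 ≤ F u := hFnonneg u (hδx1.trans hu.1)
    have hFuMt : F u / M ≤ t := by
      have hFux : F u ≤ F x := hFle u x hu0 hu.2
      rw [hxF] at hFux
      rw [div_le_iff₀ hM]
      linarith
    have hEuEt : (∫ s in (0:ℝ)..(F u / M), eps s) ≤ E t :=
      hEmono _ _ (div_nonneg hFu0 hM.le) hFuMt
    have hA2 : C ≤ (f u / u) * E t := by
      have hfu' : 0 ≤ f u / u := div_nonneg hfu.le hu0.le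
      calc C ≤ (f u / u) * ∫ s in (0:ℝ)..(F u / M), eps s := hA
        _ ≤ (f u / u) * E t := mul_le_mul_of_nonneg_left hEuEt hfu'
    have hkey : C * u ≤ f u * E t := by
      rw [div_mul_eq_mul_div, le_div_iff₀ hu0] at hA2
      linarith
    rw [div_mul_div_comm, mul_one, div_le_div_iff₀ hfu (by positivity)]
    nlinarith
  -- integral bound
  have hgcont : ContinuousOn (fun u : ℝ => E t / C * (1 / u)) (Set.uIcc (δ * x) x) := by
    apply continuousOn_const.mul
    apply continuousOn_const.div continuousOn_id
    intro u hu
    have hmin : min (δ * x) x = δ * x := min_eq_left hδxx.le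
    have hu0 : 0 < u := lt_of_lt_of_le hδx0 (hmin ▸ hu.1)
    exact ne_of_gt hu0
  have hint : (∫ u in (δ * x)..x, 1 / f u) ≤ ∫ u in (δ * x)..x, E t / C * (1 / u) :=
    intervalIntegral.integral_mono_on hδxx.le (hinvInt _ _ hδx0 hx0)
      hgcont.intervalIntegrable hptwise
  have hcalc : (∫ u in (δ * x)..x, E t / C * (1 / u)) = E t / C * (- Real.log δ) := by
    rw [intervalIntegral.integral_const_mul]
    have h0not : (0:ℝ) ∉ Set.uIcc (δ * x) x := by
      intro h0
      have := h0.1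
      rw [min_eq_left hδxx.le] at this
      linarith
    rw [integral_one_div h0not]
    congr 1
    have hxd : x / (δ * x) = 1 / δ := by
      field_simp
    rw [hxd, Real.log_div one_ne_zero (ne_of_gt hδ0), Real.log_one]
    ring
  have hlast : E t / C * (- Real.log δ) < E t := by
    have h1 : (- Real.log δ) / C < 1 := by
      rw [div_lt_one hC0]; simp only [hCdef]; linarith
    calc E t / C * (- Real.log δ) = E t * ((- Real.log δ) / C) := by ring
      _ < E t * 1 := by exact mul_lt_mul_of_pos_left h1 hEt
      _ = E t := mul_one _
  have hFδx : F x - F (δ * x) < E t := by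
    have := hFsub (δ * x) x hδx0 hx0
    rw [this]
    calc (∫ u in (δ * x)..x, 1 / f u) ≤ ∫ u in (δ * x)..x, E t / C * (1 / u) := hint
      _ = E t / C * (- Real.log δ) := hcalc
      _ < E t := hlast
  have hyδx : y < δ * x := by
    by_contra hc
    push_neg at hc
    have : F (δ * x) ≤ F y := hFle _ _ hδx0 hc
    rw [hyF] at this
    linarith [hxF ▸ hFδx]
  have hratio : y / x < δ := (div_lt_iff₀ hx0).2 (by linarith [mul_comm δ x])
  rw [Real.dist_eq, sub_zero, abs_of_pos (div_pos hy0 hx0)]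
  exact lt_of_lt_of_le hratio hδε
end

section
/- Suppose φ : (0,∞) → ℝ satisfies φ(x) → ∞ as x → ∞, φ'(x) > 0 for x > x₁, φ' is decreasing on [x₂,∞), and φ'(x) → 0 as x → ∞. If b, c : ℝ⁺ → ℝ⁺ are continuous with b(t) → ∞, c(t) → ∞, and b(t) ~ c(t) as t → ∞, then φ(b(t)) ~ φ(c(t)) as t → ∞. -/
open Filter Real Set

theorem phi_asymptotic_equivalence
    (φ : ℝ → ℝ)
    (hdiff : ∀ x > (0:ℝ), DifferentiableAt ℝ φ x)
    (hφinfty : Filter.Tendsto φ Filter.atTop Filter.atTop)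
    (x₁ x₂ : ℝ) (hx₁ : 0 < x₁) (hx₂ : x₁ ≤ x₂)
    (hderivpos : ∀ x > x₁, 0 < deriv φ x)
    (hderivdec : AntitoneOn (deriv φ) (Set.Ici x₂))
    (hderiv0 : Filter.Tendsto (deriv φ) Filter.atTop (nhds 0))
    (b c : ℝ → ℝ) (hbcont : Continuous b) (hccont : Continuous c)
    (hbpos : ∀ t ≥ (0:ℝ), 0 < b t) (hcpos : ∀ t ≥ (0:ℝ), 0 < c t)
    (hbinfty : Filter.Tendsto b Filter.atTop Filter.atTop)
    (hcinfty : Filter.Tendsto c Filter.atTop Filter.atTop)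
    (hbc : Filter.Tendsto (fun t => b t / c t) Filter.atTop (nhds 1)) :
    Filter.Tendsto (fun t => φ (b t) / φ (c t)) Filter.atTop (nhds 1) := by
  have hx₂0 : (0:ℝ) < x₂ := lt_of_lt_of_le hx₁ hx₂
  have hcont : ContinuousOn φ (Ici x₁) := fun x hx =>
    (hdiff x (lt_of_lt_of_le hx₁ hx)).continuousAt.continuousWithinAt
  have hmono : MonotoneOn φ (Ici x₁) := by
    apply (strictMonoOn_of_deriv_pos (convex_Ici x₁) hcont ?_).monotoneOn
    intro x hx
    rw [interior_Ici] at hx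
    exact hderivpos x hx
  have hint : ∀ x y, x₂ ≤ x → x ≤ y →
      IntervalIntegrable (deriv φ) MeasureTheory.volume x y := by
    intro x y hx hxy
    apply AntitoneOn.intervalIntegrable
    apply hderivdec.mono
    rw [uIcc_of_le hxy]
    intro t ht
    exact le_trans hx ht.1
  have hFTC : ∀ x y, x₂ ≤ x → x ≤ y → ∫ t in x..y, deriv φ t = φ y - φ x := by
    intro x y hx hxy
    apply intervalIntegral.integral_deriv_eq_sub
    · intro t ht
      rw [uIcc_of_le hxy] at ht
      exact hdiff t (lt_of_lt_of_le hx₂0 (le_trans hx ht.1))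
    · exact hint x y hx hxy
  have hUB : ∀ x y, x₂ ≤ x → x ≤ y → φ y - φ x ≤ deriv φ x * (y - x) := by
    intro x y hx hxy
    rw [← hFTC x y hx hxy]
    calc ∫ t in x..y, deriv φ t ≤ ∫ _t in x..y, deriv φ x := by
          apply intervalIntegral.integral_mono_on hxy (hint x y hx hxy)
            intervalIntegrable_const
          intro t ht
          exact hderivdec (mem_Ici.2 hx) (mem_Ici.2 (le_trans hx ht.1)) ht.1
      _ = deriv φ x * (y - x) := by
          rw [intervalIntegral.integral_const, smul_eq_mul, mul_comm]
  have hLB : ∀ x, x₂ ≤ x → deriv φ x * (x - x₂) ≤ φ x - φ x₂ := by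
    intro x hx
    rw [← hFTC x₂ x le_rfl hx]
    calc deriv φ x * (x - x₂) = ∫ _t in x₂..x, deriv φ x := by
          rw [intervalIntegral.integral_const, smul_eq_mul, mul_comm]
      _ ≤ ∫ t in x₂..x, deriv φ t := by
          apply intervalIntegral.integral_mono_on hx intervalIntegrable_const
            (hint x₂ x le_rfl hx)
          intro t ht
          exact hderivdec (mem_Ici.2 ht.1) (mem_Ici.2 (le_trans ht.1 ht.2)) ht.2
  obtain ⟨X, hXspec⟩ := eventually_atTop.1 (hφinfty.eventually_ge_atTop (|φ x₂| + 1))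
  rw [Metric.tendsto_nhds]
  intro ε hε
  set δ := min (ε / 16) (1 / 2) with hδdef
  have hδpos : 0 < δ := lt_min (by positivity) (by norm_num)
  have hδhalf : δ ≤ 1 / 2 := min_le_right _ _
  have hδε : δ ≤ ε / 16 := min_le_left _ _
  have E1 : ∀ᶠ t in atTop, |b t / c t - 1| < δ := by
    have := Metric.tendsto_nhds.1 hbc δ hδpos
    simpa [Real.dist_eq] using this
  have E2 : ∀ᶠ t in atTop, max (2 * x₂) X ≤ b t := hbinfty.eventually_ge_atTop _
  have E3 : ∀ᶠ t in atTop, max (2 * x₂) X ≤ c t := hcinfty.eventually_ge_atTop _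
  have E4 : ∀ᶠ t in atTop, (0:ℝ) ≤ t := eventually_ge_atTop 0
  filter_upwards [E1, E2, E3, E4] with t h1 h2 h3 h4
  have hct0 : 0 < c t := hcpos t h4
  set u := min (b t) (c t) with hu_def
  set v := max (b t) (c t) with hv_def
  have hu2 : 2 * x₂ ≤ u := le_min (le_trans (le_max_left _ _) h2) (le_trans (le_max_left _ _) h3)
  have huX : X ≤ u := le_min (le_trans (le_max_right _ _) h2) (le_trans (le_max_right _ _) h3)
  have hx₂u : x₂ ≤ u := by linarith
  have hx₁u : x₁ < u := by linarith
  have huv : u ≤ v := min_le_max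
  have huc : u ≤ c t := min_le_right _ _
  have hbcabs : |b t - c t| ≤ δ * c t := by
    have heq : b t - c t = (b t / c t - 1) * c t := by field_simp
    rw [heq, abs_mul, abs_of_pos hct0]
    exact mul_le_mul_of_nonneg_right h1.le hct0.le
  have hvu : v - u ≤ δ * c t := by
    rw [max_sub_min_eq_abs, abs_sub_comm]
    exact hbcabs
  have hcu : c t ≤ 2 * u := by
    have h5 : c t ≤ v := le_max_right _ _
    have h6 : δ * c t ≤ (1 / 2) * c t := mul_le_mul_of_nonneg_right hδhalf hct0.le
    linarith
  have hφu : |φ x₂| + 1 ≤ φ u := hXspec u huX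
  have hdu : 0 < deriv φ u := hderivpos u hx₁u
  have hux₂ : u / 2 ≤ u - x₂ := by linarith
  have h5 : deriv φ u * (u / 2) ≤ φ u - φ x₂ :=
    le_trans (mul_le_mul_of_nonneg_left hux₂ hdu.le) (hLB u hx₂u)
  have h6 : -|φ x₂| ≤ φ x₂ := neg_abs_le _
  have h7 : deriv φ u * u ≤ 4 * φ u := by
    have hr : deriv φ u * u = 2 * (deriv φ u * (u / 2)) := by ring
    linarith [abs_nonneg (φ x₂)]
  have hvu2 : v - u ≤ 2 * δ * u := by
    have := mul_le_mul_of_nonneg_left hcu hδpos.le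
    linarith
  have hkey : φ v - φ u ≤ 8 * δ * φ u := by
    have hA : φ v - φ u ≤ deriv φ u * (v - u) := hUB u v hx₂u huv
    have hB : deriv φ u * (v - u) ≤ deriv φ u * (2 * δ * u) :=
      mul_le_mul_of_nonneg_left hvu2 hdu.le
    have hC : deriv φ u * (2 * δ * u) = 2 * δ * (deriv φ u * u) := by ring
    have hD : 2 * δ * (deriv φ u * u) ≤ 2 * δ * (4 * φ u) :=
      mul_le_mul_of_nonneg_left h7 (by positivity)
    linarith
  have hφuc : φ u ≤ φ (c t) := hmono (mem_Ici.2 hx₁u.le)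
    (mem_Ici.2 (le_trans hx₁u.le huc)) huc
  have hφc0 : 0 < φ (c t) := by
    have := abs_nonneg (φ x₂)
    linarith
  have habs : |φ (b t) - φ (c t)| = φ v - φ u := by
    rcases le_total (b t) (c t) with h | h
    · have hφb : φ (b t) ≤ φ (c t) := hmono
        (mem_Ici.2 (by simp [hu_def, min_eq_left h] at hx₁u; linarith))
        (mem_Ici.2 (le_trans hx₁u.le huc)) h
      rw [abs_sub_comm, abs_of_nonneg (by linarith), hu_def, hv_def,
        min_eq_left h, max_eq_right h]
    · have hφc : φ (c t) ≤ φ (b t) := hmono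
        (mem_Ici.2 (le_trans hx₁u.le huc))
        (mem_Ici.2 (by simp [hu_def, min_eq_right h] at hx₁u; linarith)) h
      rw [abs_of_nonneg (by linarith), hu_def, hv_def,
        min_eq_right h, max_eq_left h]
  have hfinal : |φ (b t) - φ (c t)| ≤ 8 * δ * φ (c t) := by
    rw [habs]
    have : 8 * δ * φ u ≤ 8 * δ * φ (c t) :=
      mul_le_mul_of_nonneg_left hφuc (by positivity)
    linarith
  rw [Real.dist_eq]
  have hdiv : φ (b t) / φ (c t) - 1 = (φ (b t) - φ (c t)) / φ (c t) := by
    field_simp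
  rw [hdiv, abs_div, abs_of_pos hφc0, div_lt_iff₀ hφc0]
  have h8δ : 8 * δ ≤ ε / 2 := by linarith
  have : ε / 2 * φ (c t) < ε * φ (c t) := by
    apply mul_lt_mul_of_pos_right _ hφc0
    linarith
  calc |φ (b t) - φ (c t)| ≤ 8 * δ * φ (c t) := hfinal
    _ ≤ ε / 2 * φ (c t) := mul_le_mul_of_nonneg_right h8δ hφc0.le
    _ < ε * φ (c t) := this
end

section
/- Let f : (0,∞) → (0,∞) with f(x)/x → 0 as x → ∞, and F(x) = ∫₁ˣ 1/f(u) du with inverse F⁻¹. Then for every constant cst ∈ ℝ, F⁻¹(y + cst) / F⁻¹(y) → 1 as y → ∞. -/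
open Filter Real Set

theorem Finv_shift_ratio_tendsto_one
    (f : ℝ → ℝ)
    (hc : ContinuousOn f (Set.Ioi 0))
    (hpos : ∀ x > (0:ℝ), 0 < f x)
    (hsub : Filter.Tendsto (fun x => f x / x) Filter.atTop (nhds 0))
    (F Finv : ℝ → ℝ)
    (hF : ∀ x > (0:ℝ), F x = ∫ u in (1:ℝ)..x, 1 / f u)
    (hFmono : StrictMonoOn F (Set.Ioi 0))
    (hFinfty : Filter.Tendsto F Filter.atTop Filter.atTop)
    (hFleft : ∀ x > (0:ℝ), Finv (F x) = x)
    (hFright : ∀ᶠ y in Filter.atTop, 0 < Finv y ∧ F (Finv y) = y)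
    (cst : ℝ) :
    Filter.Tendsto (fun y => Finv (y + cst) / Finv y) Filter.atTop (nhds 1) := by
  rw [Metric.tendsto_nhds]
  intro ε hε
  have hlog : 0 < Real.log (1 + ε) := Real.log_pos (by linarith)
  set δ : ℝ := Real.log (1 + ε) / (|cst| + 1) with hδdef
  have hcst1 : (0:ℝ) < |cst| + 1 := by positivity
  have hδ : 0 < δ := div_pos hlog hcst1
  obtain ⟨M₀, hM₀⟩ := eventually_atTop.1 (hsub.eventually (gt_mem_nhds hδ))
  set M : ℝ := max M₀ 1 with hMdef
  have hM1 : (1:ℝ) ≤ M := le_max_right _ _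
  have hMpos : (0:ℝ) < M := lt_of_lt_of_le one_pos hM1
  have hfδ : ∀ u, M ≤ u → f u ≤ δ * u := by
    intro u hu
    have hu0 : 0 < u := lt_of_lt_of_le hMpos hu
    have h1 : f u / u < δ := hM₀ u (le_trans (le_max_left _ _) hu)
    have := (div_lt_iff₀ hu0).1 h1
    linarith
  have hint : ∀ c d : ℝ, 0 < c → c ≤ d →
      IntervalIntegrable (fun u => 1 / f u) MeasureTheory.volume c d := by
    intro c d hc0 hcd
    apply ContinuousOn.intervalIntegrable
    have hsub' : Set.uIcc c d ⊆ Set.Ioi 0 := by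
      rw [Set.uIcc_of_le hcd]
      intro u hu
      exact lt_of_lt_of_le hc0 hu.1
    exact ContinuousOn.div continuousOn_const (hc.mono hsub')
      (fun u hu => ne_of_gt (hpos u (hsub' hu)))
  have key : ∀ a b : ℝ, M ≤ a → a ≤ b →
      (Real.log b - Real.log a) / δ ≤ F b - F a := by
    intro a b ha hab
    have ha0 : 0 < a := lt_of_lt_of_le hMpos ha
    have hb0 : 0 < b := lt_of_lt_of_le ha0 hab
    rw [hF a ha0, hF b hb0]
    have hsub' : (∫ u in (1:ℝ)..b, 1 / f u) - ∫ u in (1:ℝ)..a, 1 / f u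
        = ∫ u in a..b, 1 / f u :=
      intervalIntegral.integral_interval_sub_left
        (hint 1 b one_pos (le_trans (hM1.trans ha) hab)) (hint 1 a one_pos (hM1.trans ha))
    rw [hsub']
    have hzero : (0:ℝ) ∉ Set.uIcc a b := by
      rw [Set.uIcc_of_le hab]
      intro h
      exact absurd h.1 (not_le.mpr ha0)
    have hA : (∫ u in a..b, 1 / (δ * u)) = (Real.log b - Real.log a) / δ := by
      have heq : (fun u : ℝ => 1 / (δ * u)) = fun u : ℝ => δ⁻¹ * (1 / u) := by
        funext u; rw [one_div, mul_inv, one_div]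
      rw [heq, intervalIntegral.integral_const_mul, integral_one_div hzero,
        Real.log_div (ne_of_gt hb0) (ne_of_gt ha0)]
      ring
    have hintg : IntervalIntegrable (fun u => 1 / (δ * u)) MeasureTheory.volume a b := by
      apply ContinuousOn.intervalIntegrable
      exact ContinuousOn.div continuousOn_const
        ((continuous_const.mul continuous_id).continuousOn)
        (fun u hu => by
          have hu0 : 0 < u := by
            rw [Set.uIcc_of_le hab] at hu
            exact lt_of_lt_of_le ha0 hu.1
          exact ne_of_gt (mul_pos hδ hu0))
    have hmono : (∫ u in a..b, 1 / (δ * u)) ≤ ∫ u in a..b, 1 / f u := by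
      apply intervalIntegral.integral_mono_on hab hintg (hint a b ha0 hab)
      intro u hu
      have hu0 : 0 < u := lt_of_lt_of_le ha0 hu.1
      have hfu : 0 < f u := hpos u hu0
      exact one_div_le_one_div_of_le hfu (hfδ u (le_trans ha hu.1))
    linarith [hA ▸ hmono]
  have h2 : ∀ᶠ y in atTop, 0 < Finv (y + cst) ∧ F (Finv (y + cst)) = y + cst :=
    (tendsto_atTop_add_const_right atTop cst tendsto_id).eventually hFright
  have h3 : ∀ᶠ y in atTop, F M < y + cst :=
    (tendsto_atTop_add_const_right atTop cst tendsto_id).eventually (eventually_gt_atTop (F M))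
  filter_upwards [hFright, h2, eventually_gt_atTop (F M), h3] with y hy1 hy2 hy5 hy6
  obtain ⟨hx0, hFx⟩ := hy1
  obtain ⟨hx'0, hFx'⟩ := hy2
  set x := Finv y
  set x' := Finv (y + cst)
  have hxM : M < x := by
    by_contra h
    push_neg at h
    have := hFmono.monotoneOn (Set.mem_Ioi.2 hx0) (Set.mem_Ioi.2 hMpos) h
    rw [hFx] at this
    linarith
  have hx'M : M < x' := by
    by_contra h
    push_neg at h
    have := hFmono.monotoneOn (Set.mem_Ioi.2 hx'0) (Set.mem_Ioi.2 hMpos) h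
    rw [hFx'] at this
    linarith
  have hD : |Real.log (x' / x)| ≤ δ * |cst| := by
    rw [Real.log_div (ne_of_gt hx'0) (ne_of_gt hx0)]
    rcases le_total x x' with h | h
    · have hk := key x x' (le_of_lt hxM) h
      rw [hFx, hFx'] at hk
      have hk' : (Real.log x' - Real.log x) / δ ≤ cst := by linarith
      have h1 : Real.log x' - Real.log x ≤ δ * cst := by
        rw [div_le_iff₀ hδ] at hk'; linarith [hk']
      have h2' : 0 ≤ Real.log x' - Real.log x := by
        have := Real.log_le_log (by positivity) h
        linarith
      rw [abs_of_nonneg h2']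
      calc Real.log x' - Real.log x ≤ δ * cst := h1
        _ ≤ δ * |cst| := by
            have := le_abs_self cst
            nlinarith
    · have hk := key x' x (le_of_lt hx'M) h
      rw [hFx, hFx'] at hk
      have hk' : (Real.log x - Real.log x') / δ ≤ -cst := by linarith
      have h1 : Real.log x - Real.log x' ≤ δ * (-cst) := by
        rw [div_le_iff₀ hδ] at hk'; linarith [hk']
      have h2' : Real.log x' - Real.log x ≤ 0 := by
        have := Real.log_le_log (by positivity) h
        linarith
      rw [abs_of_nonpos h2']
      calc -(Real.log x' - Real.log x) ≤ δ * (-cst) := by linarith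
        _ ≤ δ * |cst| := by
            have := neg_abs_le cst
            nlinarith
  have hDlt : δ * |cst| < Real.log (1 + ε) := by
    have h7 : δ * (|cst| + 1) = Real.log (1 + ε) := by
      rw [hδdef]; field_simp
    nlinarith
  have habs : |Real.log (x' / x)| < Real.log (1 + ε) := lt_of_le_of_lt hD hDlt
  rw [abs_lt] at habs
  have hr : 0 < x' / x := div_pos hx'0 hx0
  have hupper : x' / x < 1 + ε := by
    have := Real.exp_lt_exp.2 habs.2
    rwa [Real.exp_log hr, Real.exp_log (by linarith : (0:ℝ) < 1 + ε)] at this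
  have hlower : (1 + ε)⁻¹ < x' / x := by
    have := Real.exp_lt_exp.2 habs.1
    rwa [Real.exp_log hr, Real.exp_neg, Real.exp_log (by linarith : (0:ℝ) < 1 + ε)] at this
  have hlower' : 1 - ε < x' / x := by
    have h8 : 1 - ε < (1 + ε)⁻¹ := by
      rw [inv_eq_one_div, lt_div_iff₀ (by linarith : (0:ℝ) < 1 + ε)]
      nlinarith
    linarith
  rw [Real.dist_eq, abs_lt]
  constructor <;> linarith
end
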